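/- arXiv:1702.00209 — 2 statements merged into one kernel-verified Lean document; each statement's English description precedes it below -/
import Mathlib

section
/- Assume the sharing probabilities are pairwise distinct (ρ_i ≠ ρ_j whenever i ≠ j). If c* is an optimal pushing strategy, then at most one index i satisfies 0 < c*_i < 1; for every other index j, either c*_j = 0 or c*_j = 1. -/
/-! Exchange argument. If `c i < 1`, `0 < c j` and `ρ j < ρ i`, move request mass `ε > 0` from
coordinate `j` to coordinate `i`, i.e. raise `c i` by `ε / t i` and lower `c j` by `ε / t j`.
The cached mass `∑ t (1 - c)` is unchanged while the shared mass `∑ t ρ c` grows by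
`ε (ρ i - ρ j) > 0`, so the gain strictly increases. With distinct `ρ`, two fractional
coordinates always admit such a move in one direction. -/

open Finset

noncomputable def offloadingGain {ι : Type*} [Fintype ι] (B : ℝ) (t ρ c : ι → ℝ) : ℝ :=
  (∑ i, t i * (1 - c i)) * (1 - Real.exp (-B * ∑ k, t k * ρ k * c k))

section Transfer

variable {ι : Type*} [DecidableEq ι]

def transfer (c : ι → ℝ) (i j : ι) (a b : ℝ) : ι → ℝ :=
  c + Pi.single i a - Pi.single j b

variable [Fintype ι]

lemma sum_mul_transfer (w c : ι → ℝ) (i j : ι) (a b : ℝ) :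
    ∑ k, w k * transfer c i j a b k = ∑ k, w k * c k + w i * a - w j * b := by
  simp [transfer, mul_add, mul_sub, sum_add_distrib, sum_sub_distrib, Pi.single_apply]

lemma sum_mul_one_sub_transfer (w c : ι → ℝ) (i j : ι) (a b : ℝ) :
    ∑ k, w k * (1 - transfer c i j a b k) = ∑ k, w k * (1 - c k) - w i * a + w j * b := by
  simp only [mul_sub, mul_one, sum_sub_distrib, sum_mul_transfer]
  ring

omit [Fintype ι] in
lemma transfer_mem_cube {c : ι → ℝ} (hc : ∀ k, 0 ≤ c k ∧ c k ≤ 1) {i j : ι}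
    (hij : i ≠ j) {a b : ℝ} (ha : 0 ≤ a) (hai : a ≤ 1 - c i) (hb : 0 ≤ b) (hbj : b ≤ c j) :
    ∀ k, 0 ≤ transfer c i j a b k ∧ transfer c i j a b k ≤ 1 := by
  intro k
  obtain ⟨hc0, hc1⟩ := hc k
  rcases eq_or_ne k i with rfl | hki
  · simp [transfer, hij]; constructor <;> linarith
  rcases eq_or_ne k j with rfl | hkj
  · simp [transfer, hki]; constructor <;> linarith
  · simpa [transfer, hki, hkj] using hc k

end Transfer

section Gain

variable {ι : Type*} [Fintype ι] {B : ℝ} {t ρ : ι → ℝ}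

lemma offloadingGain_lt_offloadingGain (hB : 0 < B) {c d : ι → ℝ}
    (hpos : 0 < ∑ k, t k * (1 - c k)) (hfirst : ∑ k, t k * (1 - d k) = ∑ k, t k * (1 - c k))
    (hshared : ∑ k, t k * ρ k * c k < ∑ k, t k * ρ k * d k) :
    offloadingGain B t ρ c < offloadingGain B t ρ d := by
  unfold offloadingGain
  rw [hfirst]
  have hexp : Real.exp (-B * ∑ k, t k * ρ k * d k) < Real.exp (-B * ∑ k, t k * ρ k * c k) :=
    Real.exp_lt_exp.2 (by nlinarith)
  exact mul_lt_mul_of_pos_left (by linarith) hpos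

lemma sum_mul_one_sub_pos (ht : ∀ k, 0 < t k) {c : ι → ℝ} (hc : ∀ k, c k ≤ 1) {i : ι}
    (hi : c i < 1) : 0 < ∑ k, t k * (1 - c k) :=
  sum_pos' (fun k _ => mul_nonneg (ht k).le (sub_nonneg.2 (hc k)))
    ⟨i, mem_univ i, mul_pos (ht i) (sub_pos.2 hi)⟩

lemma exists_offloadingGain_gt [DecidableEq ι] (hB : 0 < B) (ht : ∀ k, 0 < t k)
    {c : ι → ℝ} (hc : ∀ k, 0 ≤ c k ∧ c k ≤ 1) {i j : ι} (hij : i ≠ j)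
    (hi : c i < 1) (hj : 0 < c j) (hρ : ρ j < ρ i) :
    ∃ d : ι → ℝ, (∀ k, 0 ≤ d k ∧ d k ≤ 1) ∧ offloadingGain B t ρ c < offloadingGain B t ρ d := by
  set ε := min (t i * (1 - c i)) (t j * c j)
  have hε : 0 < ε := lt_min (mul_pos (ht i) (sub_pos.2 hi)) (mul_pos (ht j) hj)
  have hti : t i ≠ 0 := (ht i).ne'
  have htj : t j ≠ 0 := (ht j).ne'
  refine ⟨transfer c i j (ε / t i) (ε / t j), transfer_mem_cube hc hij (div_pos hε (ht i)).le
    ((div_le_iff₀' (ht i)).2 (min_le_left _ _)) (div_pos hε (ht j)).le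
    ((div_le_iff₀' (ht j)).2 (min_le_right _ _)), ?_⟩
  apply offloadingGain_lt_offloadingGain hB (sum_mul_one_sub_pos ht (fun k => (hc k).2) hi)
  · rw [sum_mul_one_sub_transfer]
    field_simp
    ring
  · rw [sum_mul_transfer]
    field_simp
    nlinarith

end Gain

theorem stmt_1_general (M : ℕ) (B : ℝ) (hB : 0 < B)
    (t ρ : Fin M → ℝ) (ht : ∀ i, 0 < t i)
    (hdist : ∀ i j : Fin M, i ≠ j → ρ i ≠ ρ j)
    (c : Fin M → ℝ) (hc : ∀ i, 0 ≤ c i ∧ c i ≤ 1)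
    (hopt : ∀ d : Fin M → ℝ, (∀ i, 0 ≤ d i ∧ d i ≤ 1) →
      (∑ i, t i * (1 - d i)) * (1 - Real.exp (-B * ∑ k, t k * ρ k * d k)) ≤
      (∑ i, t i * (1 - c i)) * (1 - Real.exp (-B * ∑ k, t k * ρ k * c k))) :
    (∀ i j : Fin M, 0 < c i → c i < 1 → 0 < c j → c j < 1 → i = j) ∧
    (∀ i : Fin M, 0 < c i → c i < 1 → ∀ j : Fin M, j ≠ i → c j = 0 ∨ c j = 1) := by
  have atMostOneFractional : ∀ i j : Fin M, 0 < c i → c i < 1 → 0 < c j → c j < 1 → i = j := by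
    intro i j hi₀ hi₁ hj₀ hj₁
    by_contra hij
    wlog hρ : ρ j < ρ i generalizing i j
    · exact this j i hj₀ hj₁ hi₀ hi₁ (Ne.symm hij)
        ((hdist i j hij).lt_or_gt.resolve_right hρ)
    obtain ⟨d, hd, hlt⟩ := exists_offloadingGain_gt hB ht hc hij hi₁ hj₀ hρ
    exact (hopt d hd).not_gt hlt
  refine ⟨atMostOneFractional, fun i hi₀ hi₁ j hji => ?_⟩
  by_contra! hj
  exact hji (atMostOneFractional j i ((hc j).1.lt_of_ne (Ne.symm hj.1)) ((hc j).2.lt_of_ne hj.2) hi₀ hi₁)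

/-- With pairwise distinct sharing probabilities, an optimal pushing
strategy has at most one coordinate strictly between 0 and 1; all others are 0 or 1. -/
theorem stmt_1 (M : ℕ) (hM : 1 ≤ M) (B : ℝ) (hB : 0 < B)
    (t ρ : Fin M → ℝ) (ht : ∀ i, 0 < t i) (hρ : ∀ i, 0 < ρ i ∧ ρ i ≤ 1)
    (hdist : ∀ i j : Fin M, i ≠ j → ρ i ≠ ρ j)
    (c : Fin M → ℝ) (hc : ∀ i, 0 ≤ c i ∧ c i ≤ 1)
    (hopt : ∀ d : Fin M → ℝ, (∀ i, 0 ≤ d i ∧ d i ≤ 1) →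
      (∑ i, t i * (1 - d i)) * (1 - Real.exp (-B * ∑ k, t k * ρ k * d k)) ≤
      (∑ i, t i * (1 - c i)) * (1 - Real.exp (-B * ∑ k, t k * ρ k * c k))) :
    (∀ i j : Fin M, 0 < c i → c i < 1 → 0 < c j → c j < 1 → i = j) ∧
    (∀ i : Fin M, 0 < c i → c i < 1 → ∀ j : Fin M, j ≠ i → c j = 0 ∨ c j = 1) :=
  stmt_1_general M B hB t ρ ht hdist c hc hopt
end

section
/- The function g_m is strictly decreasing on [0,1] and satisfies g_m(x) = G₋ₘ'(x)/t_m there. Consequently: if g_m(0) ≤ 0 then x = 0 maximizes G₋ₘ over [0,1]; if g_m(1) ≥ 0 then x = 1 maximizes G₋ₘ over [0,1]; and if g_m(0) > 0 > g_m(1) then there is a unique x₀ ∈ (0,1) with g_m(x₀) = 0 and this x₀ maximizes G₋ₘ over [0,1]. -/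
/-!
Both `G₋ₘ` and `g_m` are sums of exponentials in `x`, and differentiating gives
`G₋ₘ' = t_m g_m`. Differentiating once more, `g_m'(x)` is a negative multiple of
`2 + a (1 - x)`, where `a = B t_m ρⁱ_m > 0`, plus a nonpositive term, so `g_m` is
strictly decreasing on `x ≤ 1`.
Hence `G₋ₘ` increases while `g_m ≥ 0` and decreases afterwards, and it is maximized
at the unique sign change of `g_m` in `[0,1]`, or at the endpoint where `g_m` has the
right sign throughout.
-/

/-- The single-group objective `G₋ₘ(x)` of problem P3. -/
noncomputable def Gminus (M : ℕ) (B : ℝ) (t ρi ρo : Fin M → ℝ) (m : Fin M)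
    (c : Fin M → ℝ) (x : ℝ) : ℝ :=
  t m * (1 - x) *
      (1 - Real.exp (-(B * t m * ρi m * x) -
        B * ∑ k ∈ Finset.univ.erase m, t k * ρo k * c k)) +
    ∑ k ∈ Finset.univ.erase m, t k * (1 - c k) *
      (1 - Real.exp (-(B * t m * ρo m * x) -
        (B * (∑ q ∈ (Finset.univ.erase m).erase k, t q * ρo q * c q) +
          B * t k * ρi k * c k)))

/-- The function `g_m(x)` of Proposition 5.1, with
`I_m = ∑_{k ≠ m} Q_k exp(−Φ_k)`. -/
noncomputable def gm (M : ℕ) (B : ℝ) (t ρi ρo : Fin M → ℝ) (m : Fin M)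
    (c : Fin M → ℝ) (x : ℝ) : ℝ :=
  (1 + B * t m * ρi m * (1 - x)) *
      Real.exp (-(B * t m * ρi m * x) -
        B * ∑ k ∈ Finset.univ.erase m, t k * ρo k * c k) +
    B * (∑ k ∈ Finset.univ.erase m, t k * (1 - c k) *
        Real.exp (-(B * (∑ q ∈ (Finset.univ.erase m).erase k, t q * ρo q * c q) +
          B * t k * ρi k * c k))) * ρo m *
      Real.exp (-(B * t m * ρo m * x)) - 1

open Real Set Finset

noncomputable section

def objective {ι : Type*} (T a b φ : ℝ) (s : Finset ι) (Q Φ : ι → ℝ) (x : ℝ) : ℝ :=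
  T * (1 - x) * (1 - exp (-(a * x) - φ)) + ∑ k ∈ s, Q k * (1 - exp (-(b * x) - Φ k))

def marginal (a b φ C x : ℝ) : ℝ :=
  (1 + a * (1 - x)) * exp (-(a * x) - φ) + C * exp (-(b * x)) - 1

lemma hasDerivAt_exp_neg_mul_sub (a φ x : ℝ) :
    HasDerivAt (fun x => exp (-(a * x) - φ)) (-a * exp (-(a * x) - φ)) x := by
  have h := (((hasDerivAt_id x).const_mul a).fun_neg.sub_const φ).exp
  simp only [id_eq] at h
  convert h using 1
  ring

lemma hasDerivAt_one_sub_exp_neg_mul_sub (a φ x : ℝ) :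
    HasDerivAt (fun x => 1 - exp (-(a * x) - φ)) (a * exp (-(a * x) - φ)) x :=
  ((hasDerivAt_exp_neg_mul_sub a φ x).const_sub 1).congr_deriv (by ring)

lemma hasDerivAt_marginal (a b φ C x : ℝ) :
    HasDerivAt (marginal a b φ C)
      (-(a * (2 + a * (1 - x)) * exp (-(a * x) - φ)) - C * b * exp (-(b * x))) x := by
  have hlin : HasDerivAt (fun x : ℝ => 1 + a * (1 - x)) (-a) x :=
    ((((hasDerivAt_id x).const_sub 1).const_mul a).const_add 1).congr_deriv (by ring)
  have hexp := (hasDerivAt_exp_neg_mul_sub b 0 x).const_mul C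
  simp only [sub_zero] at hexp
  have hprod := hlin.fun_mul (hasDerivAt_exp_neg_mul_sub a φ x)
  refine ((hprod.fun_add hexp).sub_const 1).congr_deriv ?_
  ring

lemma continuous_marginal (a b φ C : ℝ) : Continuous (marginal a b φ C) :=
  continuous_iff_continuousAt.2 fun x => (hasDerivAt_marginal a b φ C x).continuousAt

lemma strictAntiOn_marginal {a b C : ℝ} (ha : 0 < a) (hb : 0 ≤ b) (hC : 0 ≤ C) (φ : ℝ) :
    StrictAntiOn (marginal a b φ C) (Iic 1) := by
  refine strictAntiOn_of_hasDerivWithinAt_neg (convex_Iic 1)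
    (continuous_marginal a b φ C).continuousOn
    (fun x _ => (hasDerivAt_marginal a b φ C x).hasDerivWithinAt) fun x hx => ?_
  rw [interior_Iic] at hx
  have hquad : 0 < a * (2 + a * (1 - x)) := by
    have : 0 < a * (1 - x) := mul_pos ha (sub_pos.2 hx)
    positivity
  have hexp : 0 ≤ C * b * exp (-(b * x)) := by positivity
  linarith [mul_pos hquad (exp_pos (-(a * x) - φ))]

lemma hasDerivAt_objective {ι : Type*} {T a b φ C : ℝ} {s : Finset ι} {Q Φ : ι → ℝ}
    (hC : T * C = b * ∑ k ∈ s, Q k * exp (-Φ k)) (x : ℝ) :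
    HasDerivAt (objective T a b φ s Q Φ) (T * marginal a b φ C x) x := by
  have hfirst : HasDerivAt (fun x => T * (1 - x) * (1 - exp (-(a * x) - φ)))
      (-T * (1 - exp (-(a * x) - φ)) + T * (1 - x) * (a * exp (-(a * x) - φ))) x :=
    ((((hasDerivAt_id x).const_sub 1).const_mul T).congr_deriv (by ring)).fun_mul
      (hasDerivAt_one_sub_exp_neg_mul_sub a φ x)
  have hsum : HasDerivAt (fun x => ∑ k ∈ s, Q k * (1 - exp (-(b * x) - Φ k)))
      (∑ k ∈ s, Q k * (b * exp (-(b * x) - Φ k))) x :=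
    .fun_sum fun k _ => (hasDerivAt_one_sub_exp_neg_mul_sub b (Φ k) x).const_mul (Q k)
  have hsum_eq : ∑ k ∈ s, Q k * (b * exp (-(b * x) - Φ k))
      = T * C * exp (-(b * x)) := by
    rw [hC, Finset.mul_sum, Finset.sum_mul]
    refine Finset.sum_congr rfl fun k _ => ?_
    rw [sub_eq_add_neg, exp_add]
    ring
  refine (hfirst.fun_add hsum).congr_deriv ?_
  rw [hsum_eq, marginal]
  ring

lemma isMaxOn_Icc_of_hasDerivAt {f f' : ℝ → ℝ} {a b x₀ : ℝ}
    (hf : ∀ x, HasDerivAt f (f' x) x) (hx₀ : x₀ ∈ Icc a b)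
    (hl : ∀ x ∈ Ioo a x₀, 0 ≤ f' x) (hr : ∀ x ∈ Ioo x₀ b, f' x ≤ 0) :
    IsMaxOn f (Icc a b) x₀ := by
  have hcont : Continuous f := continuous_iff_continuousAt.2 fun x => (hf x).continuousAt
  intro y hy
  rcases le_total y x₀ with hyx | hxy
  · have hmono := monotoneOn_of_hasDerivWithinAt_nonneg (convex_Icc a x₀) hcont.continuousOn
      (fun x _ => (hf x).hasDerivWithinAt) (by rwa [interior_Icc])
    exact hmono ⟨hy.1, hyx⟩ ⟨hx₀.1, le_rfl⟩ hyx
  · have hanti := antitoneOn_of_hasDerivWithinAt_nonpos (convex_Icc x₀ b) hcont.continuousOn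
      (fun x _ => (hf x).hasDerivWithinAt) (by rwa [interior_Icc])
    exact hanti ⟨le_rfl, hx₀.2⟩ ⟨hxy, hy.2⟩ hxy

/-- `hl` and `hr` are the first-order (KKT) conditions for maximizing over `[a, b]`; since
`g` is strictly decreasing they are also sufficient. -/
lemma isMaxOn_Icc_of_hasDerivAt_mul_strictAntiOn {f g : ℝ → ℝ} {a b c x₀ : ℝ}
    (hf : ∀ x, HasDerivAt f (c * g x) x) (hc : 0 ≤ c) (hg : StrictAntiOn g (Icc a b))
    (hx₀ : x₀ ∈ Icc a b) (hl : a < x₀ → 0 ≤ g x₀) (hr : x₀ < b → g x₀ ≤ 0) :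
    IsMaxOn f (Icc a b) x₀ := by
  refine isMaxOn_Icc_of_hasDerivAt hf hx₀ (fun x hx => ?_) (fun x hx => ?_)
  · have hlt := hg ⟨hx.1.le, hx.2.le.trans hx₀.2⟩ hx₀ hx.2
    exact mul_nonneg hc ((hl (hx.1.trans hx.2)).trans hlt.le)
  · have hlt := hg hx₀ ⟨hx₀.1.trans hx.1.le, hx.2.le⟩ hx.1
    exact mul_nonpos_of_nonneg_of_nonpos hc (hlt.le.trans (hr (hx.1.trans hx.2)))

namespace Gminus

variable (M : ℕ) (B : ℝ) (t ρi ρo : Fin M → ℝ) (m : Fin M) (c : Fin M → ℝ)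

def φ : ℝ := B * ∑ k ∈ univ.erase m, t k * ρo k * c k

def Φ (k : Fin M) : ℝ :=
  B * (∑ q ∈ (univ.erase m).erase k, t q * ρo q * c q) + B * t k * ρi k * c k

def I : ℝ := ∑ k ∈ univ.erase m, t k * (1 - c k) * exp (-Φ M B t ρi ρo m c k)

lemma eq_objective : Gminus M B t ρi ρo m c =
    objective (t m) (B * t m * ρi m) (B * t m * ρo m) (φ M B t ρo m c) (univ.erase m)
      (fun k => t k * (1 - c k)) (Φ M B t ρi ρo m c) :=
  rfl

lemma gm_eq_marginal : gm M B t ρi ρo m c =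
    marginal (B * t m * ρi m) (B * t m * ρo m) (φ M B t ρo m c)
      (B * I M B t ρi ρo m c * ρo m) :=
  rfl

lemma hasDerivAt (x : ℝ) :
    HasDerivAt (Gminus M B t ρi ρo m c) (t m * gm M B t ρi ρo m c x) x := by
  rw [eq_objective, gm_eq_marginal]
  exact hasDerivAt_objective (by rw [I]; ring) x

variable {M B t ρi ρo m c}

lemma I_nonneg (ht : ∀ i, 0 < t i) (hc : ∀ k, k ≠ m → 0 ≤ c k ∧ c k ≤ 1) :
    0 ≤ I M B t ρi ρo m c :=
  Finset.sum_nonneg fun k hk => by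
    have : 0 ≤ 1 - c k := sub_nonneg.2 (hc k (Finset.ne_of_mem_erase hk)).2
    have := (ht k).le
    positivity

end Gminus

end

theorem stmt_18_general (M : ℕ) (B : ℝ) (hB : 0 < B)
    (t ρi ρo : Fin M → ℝ) (ht : ∀ i, 0 < t i)
    (hρi : ∀ i, 0 < ρi i ∧ ρi i ≤ 1) (hρo : ∀ i, 0 < ρo i ∧ ρo i ≤ 1)
    (m : Fin M) (c : Fin M → ℝ) (hc : ∀ k, k ≠ m → 0 ≤ c k ∧ c k ≤ 1) :
    StrictAntiOn (gm M B t ρi ρo m c) (Set.Icc (0 : ℝ) 1) ∧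
    (∀ x ∈ Set.Icc (0 : ℝ) 1,
      gm M B t ρi ρo m c x = deriv (Gminus M B t ρi ρo m c) x / t m) ∧
    (gm M B t ρi ρo m c 0 ≤ 0 →
      ∀ y ∈ Set.Icc (0 : ℝ) 1, Gminus M B t ρi ρo m c y ≤ Gminus M B t ρi ρo m c 0) ∧
    (0 ≤ gm M B t ρi ρo m c 1 →
      ∀ y ∈ Set.Icc (0 : ℝ) 1, Gminus M B t ρi ρo m c y ≤ Gminus M B t ρi ρo m c 1) ∧
    (0 < gm M B t ρi ρo m c 0 → gm M B t ρi ρo m c 1 < 0 →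
      ∃ x₀ ∈ Set.Ioo (0 : ℝ) 1, gm M B t ρi ρo m c x₀ = 0 ∧
        (∀ y ∈ Set.Ioo (0 : ℝ) 1, gm M B t ρi ρo m c y = 0 → y = x₀) ∧
        ∀ y ∈ Set.Icc (0 : ℝ) 1,
          Gminus M B t ρi ρo m c y ≤ Gminus M B t ρi ρo m c x₀) := by
  have htm := ht m
  have hG := Gminus.hasDerivAt M B t ρi ρo m c
  have hanti : StrictAntiOn (gm M B t ρi ρo m c) (Icc 0 1) := by
    have := (hρi m).1
    have := (hρo m).1
    have : 0 ≤ Gminus.I M B t ρi ρo m c := Gminus.I_nonneg ht hc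
    rw [Gminus.gm_eq_marginal]
    exact (strictAntiOn_marginal (by positivity) (by positivity) (by positivity) _).mono
      Icc_subset_Iic_self
  have hmax := fun x₀ => isMaxOn_Icc_of_hasDerivAt_mul_strictAntiOn (x₀ := x₀) hG htm.le hanti
  refine ⟨hanti, fun x _ => by rw [(hG x).deriv, mul_div_cancel_left₀ _ htm.ne'],
    fun h0 => hmax 0 (left_mem_Icc.2 zero_le_one) (absurd · (lt_irrefl 0)) fun _ => h0,
    fun h1 => hmax 1 (right_mem_Icc.2 zero_le_one) (fun _ => h1) (absurd · (lt_irrefl 1)),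
    fun h0 h1 => ?_⟩
  have hcont : ContinuousOn (gm M B t ρi ρo m c) (Icc 0 1) :=
    (Gminus.gm_eq_marginal M B t ρi ρo m c ▸ continuous_marginal _ _ _ _).continuousOn
  obtain ⟨x₀, hx₀, hgx₀⟩ := intermediate_value_Ioo' zero_le_one hcont ⟨h1, h0⟩
  exact ⟨x₀, hx₀, hgx₀,
    fun y hy hgy =>
      hanti.injOn (Ioo_subset_Icc_self hy) (Ioo_subset_Icc_self hx₀) (hgy.trans hgx₀.symm),
    hmax x₀ (Ioo_subset_Icc_self hx₀) (fun _ => hgx₀.ge) fun _ => hgx₀.le⟩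

/-- `g_m` is strictly decreasing on `[0,1]` and equals
`G₋ₘ'(x)/t_m` there; consequently, if `g_m(0) ≤ 0` then `0` maximizes `G₋ₘ` on
`[0,1]`, if `g_m(1) ≥ 0` then `1` maximizes it, and if `g_m(0) > 0 > g_m(1)` then
`g_m` has a unique zero `x₀ ∈ (0,1)` which maximizes `G₋ₘ` on `[0,1]`. -/
theorem stmt_18 (M : ℕ) (hM : 1 ≤ M) (B : ℝ) (hB : 0 < B)
    (t ρi ρo : Fin M → ℝ) (ht : ∀ i, 0 < t i)
    (hρi : ∀ i, 0 < ρi i ∧ ρi i ≤ 1) (hρo : ∀ i, 0 < ρo i ∧ ρo i ≤ 1)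
    (m : Fin M) (c : Fin M → ℝ) (hc : ∀ k, k ≠ m → 0 ≤ c k ∧ c k ≤ 1) :
    StrictAntiOn (gm M B t ρi ρo m c) (Set.Icc (0 : ℝ) 1) ∧
    (∀ x ∈ Set.Icc (0 : ℝ) 1,
      gm M B t ρi ρo m c x = deriv (Gminus M B t ρi ρo m c) x / t m) ∧
    (gm M B t ρi ρo m c 0 ≤ 0 →
      ∀ y ∈ Set.Icc (0 : ℝ) 1, Gminus M B t ρi ρo m c y ≤ Gminus M B t ρi ρo m c 0) ∧
    (0 ≤ gm M B t ρi ρo m c 1 →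
      ∀ y ∈ Set.Icc (0 : ℝ) 1, Gminus M B t ρi ρo m c y ≤ Gminus M B t ρi ρo m c 1) ∧
    (0 < gm M B t ρi ρo m c 0 → gm M B t ρi ρo m c 1 < 0 →
      ∃ x₀ ∈ Set.Ioo (0 : ℝ) 1, gm M B t ρi ρo m c x₀ = 0 ∧
        (∀ y ∈ Set.Ioo (0 : ℝ) 1, gm M B t ρi ρo m c y = 0 → y = x₀) ∧
        ∀ y ∈ Set.Icc (0 : ℝ) 1,
          Gminus M B t ρi ρo m c y ≤ Gminus M B t ρi ρo m c x₀) :=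
  stmt_18_general M B hB t ρi ρo ht hρi hρo m c hc
end
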